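/- arXiv:1807.02575 — 7 statements merged into one kernel-verified Lean document; each statement's English description precedes it below -/
import Mathlib

section
/- Let μ be a finite measure on a measurable space, let f : ℝ → ℝ be globally Lipschitz, let φ : ℝ → ℝ be an antiderivative of f, and define Φ(u) := ∫ φ(u(x)) dμ(x) for u ∈ L²(μ). Then for all u, h ∈ L²(μ), the Gâteaux directional derivative of Φ at u in direction h exists and equals ∫ f(u(x))·h(x) dμ(x); that is, the real function t ↦ Φ(u + t·h) is differentiable at t = 0 with derivative ∫ f(u(x))·h(x) dμ(x). -/
/-!
Differentiate under the integral sign. For each `x`, `t ↦ φ (u x + t * h x)` has derivative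
`f (u x) * h x` at `0`, and on `|t| < 1` it is Lipschitz with constant
`(|f (u x)| + L |h x|) |h x|`, since `|f|` grows at most like `|f (u x)| + L |r - u x|`.
This constant is integrable because `f ∘ u` and `h` lie in `L²(μ)`, and `φ ∘ u` is integrable
because `|φ r - φ 0| ≤ (|f 0| + L |r|) |r|` is quadratic in `r`.
-/

open MeasureTheory Metric
open scoped NNReal

section

variable {E F : Type*} [NormedAddCommGroup E] [NormedAddCommGroup F] {g : E → F}
  {K : ℝ≥0}

theorem LipschitzWith.norm_le_add_mul_norm_sub (hg : LipschitzWith K g) (x c : E) :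
    ‖g x‖ ≤ ‖g c‖ + K * ‖x - c‖ :=
  (norm_le_norm_add_norm_sub' _ (g c)).trans (by gcongr; exact hg.norm_sub_le x c)

theorem LipschitzWith.memLp_comp {α : Type*} [MeasurableSpace α] {μ : Measure α}
    [IsFiniteMeasure μ] (hg : LipschitzWith K g) {u : α → E} {p : ENNReal} (hu : MemLp u p μ) :
    MemLp (fun x => g (u x)) p μ := by
  refine ((memLp_const ‖g 0‖).add (hu.norm.const_mul K)).of_le
    (hg.continuous.comp_aestronglyMeasurable hu.1) (Filter.Eventually.of_forall fun x => ?_)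
  simpa using (hg.norm_le_add_mul_norm_sub (u x) 0).trans (le_abs_self _)

end

section

variable {F : Type*} [NormedAddCommGroup F] [NormedSpace ℝ F] {f φ : ℝ → F} {K : ℝ≥0}

theorem LipschitzWith.lipschitzOnWith_closedBall_of_hasDerivAt (hf : LipschitzWith K f)
    (hφ : ∀ r, HasDerivAt φ (f r) r) (c : ℝ) (R : ℝ≥0) :
    LipschitzOnWith (‖f c‖₊ + K * R) φ (closedBall c R) := by
  refine (convex_closedBall c R).lipschitzOnWith_of_nnnorm_hasDerivWithin_le
    (fun r _ => (hφ r).hasDerivWithinAt) fun r hr => ?_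
  rw [← NNReal.coe_le_coe, coe_nnnorm, NNReal.coe_add, NNReal.coe_mul, coe_nnnorm]
  calc ‖f r‖ ≤ ‖f c‖ + K * ‖r - c‖ := hf.norm_le_add_mul_norm_sub r c
    _ ≤ ‖f c‖ + K * R := by gcongr; exact mem_closedBall_iff_norm.mp hr

theorem LipschitzWith.lipschitzOnWith_comp_add_mul_of_hasDerivAt (hf : LipschitzWith K f)
    (hφ : ∀ r, HasDerivAt φ (f r) r) (c v : ℝ) :
    LipschitzOnWith ((‖f c‖₊ + K * ‖v‖₊) * ‖v‖₊) (fun t => φ (c + t * v)) (ball 0 1) := by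
  have hline : LipschitzWith ‖v‖₊ (fun t : ℝ => c + t * v) := .of_dist_le_mul fun s t => by
    rw [dist_add_left, Real.dist_eq, Real.dist_eq, ← sub_mul, abs_mul, mul_comm, coe_nnnorm,
      Real.norm_eq_abs]
  refine (hf.lipschitzOnWith_closedBall_of_hasDerivAt hφ c ‖v‖₊).comp hline.lipschitzOnWith
    fun t ht => ?_
  rw [mem_ball_zero_iff] at ht
  rw [mem_closedBall_iff_norm, add_sub_cancel_left, norm_mul, coe_nnnorm]
  exact mul_le_of_le_one_left (norm_nonneg v) ht.le

theorem LipschitzWith.integrable_comp_of_hasDerivAt {α : Type*} [MeasurableSpace α]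
    {μ : Measure α} [IsFiniteMeasure μ] (hf : LipschitzWith K f)
    (hφ : ∀ r, HasDerivAt φ (f r) r) {u : α → ℝ} (hu : MemLp u 2 μ) :
    Integrable (fun x => φ (u x)) μ := by
  have hφc : Continuous φ := continuous_iff_continuousAt.2 fun r => (hφ r).continuousAt
  have hbound : Integrable (fun x => ‖φ 0‖ + ‖f 0‖ * ‖u x‖ + K * u x ^ 2) μ :=
    ((integrable_const _).add ((hu.integrable one_le_two).norm.const_mul _)).add
      (hu.integrable_sq.const_mul _)
  refine hbound.mono' (hφc.comp_aestronglyMeasurable hu.1) (Filter.Eventually.of_forall fun x => ?_)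
  have hux : u x ∈ closedBall (0 : ℝ) ‖u x‖₊ := by simp
  have hsub := (hf.lipschitzOnWith_closedBall_of_hasDerivAt hφ 0 ‖u x‖₊).norm_sub_le
    hux (mem_closedBall_self (by positivity))
  calc ‖φ (u x)‖ ≤ ‖φ 0‖ + ‖φ (u x) - φ 0‖ := norm_le_norm_add_norm_sub' _ _
    _ ≤ ‖φ 0‖ + (‖f 0‖ + K * ‖u x‖) * ‖u x‖ := by simpa using hsub
    _ = ‖φ 0‖ + ‖f 0‖ * ‖u x‖ + K * u x ^ 2 := by rw [Real.norm_eq_abs, ← sq_abs]; ring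

end

theorem gateaux_derivative_integral_antiderivative_general
    {α : Type*} [MeasurableSpace α] (μ : Measure α) [IsFiniteMeasure μ]
    (f φ : ℝ → ℝ) (L : ℝ)
    (hf : ∀ x y : ℝ, |f x - f y| ≤ L * |x - y|)
    (hφ : ∀ r : ℝ, HasDerivAt φ (f r) r)
    (u h : α → ℝ) (hu : MemLp u 2 μ) (hh : MemLp h 2 μ) :
    HasDerivAt (fun t : ℝ => ∫ x, φ (u x + t * h x) ∂μ)
      (∫ x, f (u x) * h x ∂μ) 0 := by
  have hfL : LipschitzWith L.toNNReal f := .of_dist_le' hf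
  have hφc : Continuous φ := continuous_iff_continuousAt.2 fun r => (hφ r).continuousAt
  have hfuh : Integrable (fun x => f (u x) * h x) μ := (hfL.memLp_comp hu).integrable_mul hh
  set bound : α → ℝ≥0 := fun x => (‖f (u x)‖₊ + L.toNNReal * ‖h x‖₊) * ‖h x‖₊
  have hbound : Integrable (fun x => (bound x : ℝ)) μ := by
    refine (hfuh.norm.add (hh.integrable_sq.const_mul L.toNNReal)).congr (.of_forall fun x => ?_)
    simp only [bound, Pi.add_apply, NNReal.coe_mul, NNReal.coe_add, coe_nnnorm, norm_mul,
      Real.norm_eq_abs]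
    rw [← sq_abs (h x)]
    ring
  have hderiv (x : α) : HasDerivAt (fun t => φ (u x + t * h x)) (f (u x) * h x) 0 := by
    have hline : HasDerivAt (fun t : ℝ => u x + t * h x) (h x) 0 := by
      simpa using ((hasDerivAt_id (0 : ℝ)).mul_const (h x)).const_add (u x)
    simpa [Function.comp_def] using (hφ (u x + 0 * h x)).comp 0 hline
  refine (hasDerivAt_integral_of_dominated_loc_of_lip (ball_mem_nhds 0 one_pos)
    (.of_forall fun t => hφc.comp_aestronglyMeasurable (hu.1.add (hh.1.const_mul t)))
    (by simpa using hfL.integrable_comp_of_hasDerivAt hφ hu) hfuh.1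
    (.of_forall fun x => ?_) hbound (.of_forall hderiv)).2
  rw [Real.nnabs_coe]
  exact hfL.lipschitzOnWith_comp_add_mul_of_hasDerivAt hφ (u x) (h x)

/-- Gâteaux differentiability of `Φ(u) = ∫ φ(u x) dμ` on `L²(μ)`:
the map `t ↦ Φ(u + t h)` is differentiable at `0` with derivative
`∫ f(u x) * h x dμ`. -/
theorem gateaux_derivative_integral_antiderivative
    {α : Type*} [MeasurableSpace α] (μ : Measure α) [IsFiniteMeasure μ]
    (f φ : ℝ → ℝ) (L : ℝ) (hL : 0 ≤ L)
    (hf : ∀ x y : ℝ, |f x - f y| ≤ L * |x - y|)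
    (hφ : ∀ r : ℝ, HasDerivAt φ (f r) r)
    (u h : α → ℝ) (hu : MemLp u 2 μ) (hh : MemLp h 2 μ) :
    HasDerivAt (fun t : ℝ => ∫ x, φ (u x + t * h x) ∂μ)
      (∫ x, f (u x) * h x ∂μ) 0 :=
  gateaux_derivative_integral_antiderivative_general μ f φ L hf hφ u h hu hh
end

section
/- Let 0 < A < 1 and s > 1. Then the function ξ ↦ exp(−ξ²/2) − (A·s/√2)·exp(−s²·ξ²/4) is nonnegative on all of ℝ if and only if √2 ≤ s and s ≤ √2/A. -/
/-!
Factoring out `exp (-s²ξ²/4)`, the density is nonnegative at `ξ` exactly when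
`A s / √2 ≤ exp ((s² - 2) ξ² / 4)`. For `s² ≥ 2` the right side is smallest at `ξ = 0`, giving
`A s ≤ √2`; for `s² < 2` it tends to `0`, so the inequality fails for large `ξ`.
-/

open Real

lemma sub_mul_exp_nonneg_iff (a b c : ℝ) : 0 ≤ exp a - c * exp b ↔ c ≤ exp (a - b) := by
  rw [exp_sub, le_div_iff₀ (exp_pos b), sub_nonneg]

lemma forall_le_exp_mul_sq_iff {c : ℝ} (hc : 0 < c) (a : ℝ) :
    (∀ x : ℝ, c ≤ exp (a * x ^ 2)) ↔ 0 ≤ a ∧ c ≤ 1 := by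
  refine ⟨fun h => ?_, fun ⟨ha, hc1⟩ x => hc1.trans (one_le_exp (by positivity))⟩
  have hc1 : c ≤ 1 := by simpa using h 0
  refine ⟨?_, hc1⟩
  by_contra! ha
  -- at `x² = (log c - 1) / a` the exponential equals `c / e < c`
  have hratio : 0 ≤ (log c - 1) / a :=
    div_nonneg_of_nonpos (by linarith [log_nonpos hc.le hc1]) ha.le
  have hx : a * sqrt ((log c - 1) / a) ^ 2 = log c - 1 := by
    rw [sq_sqrt hratio, mul_div_cancel₀ _ ha.ne]
  have := h (sqrt ((log c - 1) / a))
  rw [hx, exp_sub, exp_log hc, le_div_iff₀ (exp_pos 1)] at this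
  nlinarith [add_one_lt_exp one_ne_zero]

theorem mexican_hat_density_nonneg_iff_general (A s : ℝ) (hA0 : 0 < A)
    (hs : 1 < s) :
    (∀ ξ : ℝ, 0 ≤ Real.exp (-ξ ^ 2 / 2) -
        A * s / Real.sqrt 2 * Real.exp (-(s ^ 2 * ξ ^ 2) / 4)) ↔
      (Real.sqrt 2 ≤ s ∧ s ≤ Real.sqrt 2 / A) := by
  have hs0 : 0 < s := one_pos.trans hs
  have hsqrt2 : 0 < sqrt 2 := by positivity
  have hexponent (ξ : ℝ) : -ξ ^ 2 / 2 - -(s ^ 2 * ξ ^ 2) / 4 = (s ^ 2 - 2) / 4 * ξ ^ 2 := by ring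
  simp only [sub_mul_exp_nonneg_iff, hexponent]
  rw [forall_le_exp_mul_sq_iff (by positivity), div_le_one hsqrt2, le_div_iff₀' hA0,
    sqrt_le_iff]
  constructor
  · rintro ⟨hs2, hAs⟩
    exact ⟨⟨hs0.le, by linarith⟩, hAs⟩
  · rintro ⟨⟨-, hs2⟩, hAs⟩
    exact ⟨by linarith, hAs⟩

/-- The Fourier density of the Mexican hat kernel
`J(x) = exp(−x²/2) − A exp(−x²/s²)` is nonnegative on all of `ℝ`
if and only if `√2 ≤ s ≤ √2 / A`. -/
theorem mexican_hat_density_nonneg_iff (A s : ℝ) (hA0 : 0 < A) (hA1 : A < 1)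
    (hs : 1 < s) :
    (∀ ξ : ℝ, 0 ≤ Real.exp (-ξ ^ 2 / 2) -
        A * s / Real.sqrt 2 * Real.exp (-(s ^ 2 * ξ ^ 2) / 4)) ↔
      (Real.sqrt 2 ≤ s ∧ s ≤ Real.sqrt 2 / A) :=
  mexican_hat_density_nonneg_iff_general A s hA0 hs
end

section
/- Let γ₁ > γ₂ > 0 and 0 < Γ ≤ γ₂/γ₁. Then the kernel (x, y) ↦ J(x − y) with J(z) = exp(−γ₁|z|) − Γ·exp(−γ₂|z|) is nonnegative definite: for every n ∈ ℕ, all points x₁, …, xₙ ∈ ℝ and all real coefficients c₁, …, cₙ, one has ∑_{i,j=1}^n c_i·c_j·[exp(−γ₁·|x_i − x_j|) − Γ·exp(−γ₂·|x_i − x_j|)] ≥ 0. -/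
/-!
Fourier inversion gives `exp (-γ|z|) = ∫ 2γ / (γ² + (2πw)²) · cos (2πwz) dw`, so the kernel is the
cosine transform of the spectral density `2γ₁ / (γ₁² + (2πw)²) - Γ · 2γ₂ / (γ₂² + (2πw)²)`, which is
nonnegative because `Γ γ₁ ≤ γ₂ ≤ γ₁`. The cosine transform of a nonnegative density is a
nonnegative definite function (the easy half of Bochner's theorem), because
`∑ᵢⱼ cᵢ cⱼ cos (θᵢ - θⱼ) = |∑ᵢ cᵢ e^{iθᵢ}|²`.
-/

open MeasureTheory Real Set
open scoped FourierTransform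

def IsNonnegDefinite (J : ℝ → ℝ) : Prop :=
  ∀ (n : ℕ) (x c : Fin n → ℝ), 0 ≤ ∑ i, ∑ j, c i * c j * J (x i - x j)

lemma sum_sum_mul_cos_sub_eq {ι : Type*} [Fintype ι] (x c : ι → ℝ) :
    ∑ i, ∑ j, c i * c j * cos (x i - x j)
      = (∑ i, c i * cos (x i)) ^ 2 + (∑ i, c i * sin (x i)) ^ 2 := by
  simp only [sq, Finset.sum_mul_sum, ← Finset.sum_add_distrib, cos_sub]
  exact Finset.sum_congr rfl fun i _ ↦ Finset.sum_congr rfl fun j _ ↦ by ring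

lemma MeasureTheory.Integrable.mul_cos_two_pi_mul {μ : Measure ℝ} {H : ℝ → ℝ}
    (hH : Integrable H μ) (z : ℝ) :
    Integrable (fun w ↦ H w * cos (2 * π * w * z)) μ :=
  hH.mul_bdd (by fun_prop : Continuous fun w ↦ cos (2 * π * w * z)).aestronglyMeasurable
    (c := 1) (ae_of_all _ fun w ↦ by simpa using abs_cos_le_one _)

lemma isNonnegDefinite_integral_mul_cos {μ : Measure ℝ} {H : ℝ → ℝ} (hH : Integrable H μ)
    (hH0 : 0 ≤ H) : IsNonnegDefinite fun z ↦ ∫ w, H w * cos (2 * π * w * z) ∂μ := by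
  intro n x c
  calc 0 ≤ ∫ w, H w * ∑ i, ∑ j, c i * c j * cos (2 * π * w * x i - 2 * π * w * x j) ∂μ :=
        integral_nonneg fun w ↦ mul_nonneg (hH0 w) <| by
          rw [sum_sum_mul_cos_sub_eq (fun i ↦ 2 * π * w * x i)]; positivity
    _ = ∫ w, ∑ i, ∑ j, c i * c j * (H w * cos (2 * π * w * (x i - x j))) ∂μ := by
        congr 1 with w
        simp only [Finset.mul_sum, mul_sub]
        exact Finset.sum_congr rfl fun i _ ↦ Finset.sum_congr rfl fun j _ ↦ by ring
    _ = ∑ i, ∑ j, c i * c j * ∫ w, H w * cos (2 * π * w * (x i - x j)) ∂μ := by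
        rw [integral_finsetSum _ fun i _ ↦ integrable_finsetSum _ fun j _ ↦
          (hH.mul_cos_two_pi_mul _).const_mul _]
        refine Finset.sum_congr rfl fun i _ ↦ ?_
        rw [integral_finsetSum _ fun j _ ↦ (hH.mul_cos_two_pi_mul _).const_mul _]
        simp only [integral_const_mul]

lemma integrable_exp_neg_mul_abs {γ : ℝ} (hγ : 0 < γ) :
    Integrable fun x : ℝ ↦ exp (-γ * |x|) := by
  rw [← integrableOn_univ, ← Iic_union_Ioi (a := 0), integrableOn_union]
  constructor
  · refine (integrableOn_exp_mul_Iic hγ 0).congr_fun (fun x hx ↦ ?_) measurableSet_Iic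
    rw [abs_of_nonpos hx, mul_neg, neg_mul, neg_neg]
  · refine (integrableOn_exp_mul_Ioi (neg_neg_of_pos hγ) 0).congr_fun (fun x hx ↦ ?_)
      measurableSet_Ioi
    rw [abs_of_pos hx]

noncomputable def lorentzian (γ w : ℝ) : ℝ := 2 * γ / (γ ^ 2 + (2 * π * w) ^ 2)

lemma integrable_lorentzian {γ : ℝ} (hγ : 0 < γ) : Integrable (lorentzian γ) := by
  refine ((integrable_inv_one_add_sq.comp_mul_left' (by positivity : 2 * π / γ ≠ 0)).const_mul
    (2 / γ)).congr (ae_of_all _ fun w ↦ ?_)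
  simp only [lorentzian]
  field_simp

lemma fourier_exp_neg_mul_abs {γ : ℝ} (hγ : 0 < γ) (w : ℝ) :
    𝓕 (fun x : ℝ ↦ ((exp (-γ * |x|) : ℝ) : ℂ)) w = lorentzian γ w := by
  set a : ℂ := γ - 2 * π * w * Complex.I
  set b : ℂ := -γ - 2 * π * w * Complex.I
  have ha : 0 < a.re := by simpa [a] using hγ
  have hb : b.re < 0 := by simpa [b] using hγ
  have hIic : EqOn (fun v : ℝ ↦ Complex.exp (↑(-2 * π * v * w) * Complex.I) •
      ((exp (-γ * |v|) : ℝ) : ℂ)) (fun v ↦ Complex.exp (a * v)) (Iic 0) := fun v hv ↦ by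
    simp only [abs_of_nonpos (mem_Iic.mp hv), smul_eq_mul, Complex.ofReal_exp, ← Complex.exp_add]
    congr 1
    push_cast
    ring
  have hIoi : EqOn (fun v : ℝ ↦ Complex.exp (↑(-2 * π * v * w) * Complex.I) •
      ((exp (-γ * |v|) : ℝ) : ℂ)) (fun v ↦ Complex.exp (b * v)) (Ioi 0) := fun v hv ↦ by
    simp only [abs_of_pos (mem_Ioi.mp hv), smul_eq_mul, Complex.ofReal_exp, ← Complex.exp_add]
    congr 1
    push_cast
    ring
  rw [Real.fourier_real_eq_integral_exp_smul, ← intervalIntegral.integral_Iic_add_Ioi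
      ((integrableOn_exp_mul_complex_Iic ha 0).congr_fun hIic.symm measurableSet_Iic)
      ((integrableOn_exp_mul_complex_Ioi hb 0).congr_fun hIoi.symm measurableSet_Ioi),
    setIntegral_congr_fun measurableSet_Iic hIic, setIntegral_congr_fun measurableSet_Ioi hIoi,
    integral_exp_mul_complex_Iic ha, integral_exp_mul_complex_Ioi hb]
  have ha0 : a ≠ 0 := fun h ↦ by simp [h] at ha
  have hb0 : b ≠ 0 := fun h ↦ by simp [h] at hb
  have hd : ((γ ^ 2 + (2 * π * w) ^ 2 : ℝ) : ℂ) ≠ 0 :=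
    Complex.ofReal_ne_zero.mpr (by positivity)
  simp only [Complex.ofReal_zero, mul_zero, Complex.exp_zero, lorentzian]
  rw [div_add_div _ _ ha0 hb0, Complex.ofReal_div, div_eq_div_iff (mul_ne_zero ha0 hb0) hd]
  simp only [a, b]
  push_cast
  linear_combination -(2 * (γ : ℂ) * (2 * π * w) ^ 2) * Complex.I_sq

lemma exp_neg_mul_abs_eq_integral_lorentzian_mul_cos {γ : ℝ} (hγ : 0 < γ) (z : ℝ) :
    exp (-γ * |z|) = ∫ w, lorentzian γ w * cos (2 * π * w * z) := by
  set f : ℝ → ℂ := fun x ↦ ((exp (-γ * |x|) : ℝ) : ℂ)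
  have hFf : 𝓕 f = fun w ↦ (lorentzian γ w : ℂ) := funext (fourier_exp_neg_mul_abs hγ)
  have hinv := congrFun ((by fun_prop : Continuous f).fourierInv_fourier_eq
    (integrable_exp_neg_mul_abs hγ).ofReal (by rw [hFf]; exact (integrable_lorentzian hγ).ofReal)) z
  rw [Real.fourierInv_eq', hFf] at hinv
  have hint : Integrable fun w : ℝ ↦
      Complex.exp (↑(2 * π * inner ℝ w z) * Complex.I) • (lorentzian γ w : ℂ) :=
    (integrable_lorentzian hγ).ofReal.bdd_mul (c := 1) (by fun_prop)
      (ae_of_all _ fun w ↦ (Complex.norm_exp_ofReal_mul_I _).le)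
  have := congrArg Complex.re hinv
  rw [← RCLike.re_to_complex, ← integral_re hint] at this
  simp only [f, RCLike.re_to_complex, smul_eq_mul, Complex.re_mul_ofReal,
    Complex.exp_ofReal_mul_I_re, Complex.ofReal_re, RCLike.inner_apply, conj_trivial] at this
  rw [← this]
  congr 1 with w
  rw [mul_comm, mul_comm z, ← mul_assoc]

lemma mul_lorentzian_le_lorentzian {γ₁ γ₂ Γ : ℝ} (hγ₂ : 0 < γ₂) (hγ : γ₂ ≤ γ₁)
    (hΓ : Γ ≤ γ₂ / γ₁) (w : ℝ) : Γ * lorentzian γ₂ w ≤ lorentzian γ₁ w := by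
  have hγ₁ : 0 < γ₁ := hγ₂.trans_le hγ
  have hΓγ₁ : Γ * γ₁ ≤ γ₂ := (le_div_iff₀ hγ₁).mp hΓ
  have hΓγ₂ : Γ * γ₂ ≤ γ₁ := by nlinarith
  have hs : 0 ≤ (2 * π * w) ^ 2 := sq_nonneg _
  unfold lorentzian
  rw [mul_div_assoc', div_le_div_iff₀ (by positivity) (by positivity)]
  nlinarith [mul_le_mul_of_nonneg_right hΓγ₁ (mul_pos hγ₁ hγ₂).le,
    mul_le_mul_of_nonneg_right hΓγ₂ hs]

theorem exp_abs_difference_nonneg_definite_general (γ₁ γ₂ Γ : ℝ) (h21 : γ₂ < γ₁)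
    (h2 : 0 < γ₂) (hΓ : Γ ≤ γ₂ / γ₁) :
    ∀ (n : ℕ) (x c : Fin n → ℝ),
      0 ≤ ∑ i, ∑ j, c i * c j *
          (Real.exp (-γ₁ * |x i - x j|) - Γ * Real.exp (-γ₂ * |x i - x j|)) := by
  have hγ₁ : 0 < γ₁ := h2.trans h21
  have hspectral : (fun z ↦ exp (-γ₁ * |z|) - Γ * exp (-γ₂ * |z|))
      = fun z ↦ ∫ w, (lorentzian γ₁ w - Γ * lorentzian γ₂ w) * cos (2 * π * w * z) := by
    ext z
    rw [exp_neg_mul_abs_eq_integral_lorentzian_mul_cos hγ₁,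
      exp_neg_mul_abs_eq_integral_lorentzian_mul_cos h2, ← integral_const_mul,
      ← integral_sub ((integrable_lorentzian hγ₁).mul_cos_two_pi_mul z)
        (((integrable_lorentzian h2).mul_cos_two_pi_mul z).const_mul Γ)]
    simp only [sub_mul, mul_assoc]
  suffices IsNonnegDefinite fun z ↦ exp (-γ₁ * |z|) - Γ * exp (-γ₂ * |z|) from this
  rw [hspectral]
  exact isNonnegDefinite_integral_mul_cos
    ((integrable_lorentzian hγ₁).sub ((integrable_lorentzian h2).const_mul Γ))
    (fun w ↦ sub_nonneg.mpr (mul_lorentzian_le_lorentzian h2 h21.le hΓ w))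

/-- For `γ₁ > γ₂ > 0` and `0 < Γ ≤ γ₂/γ₁`, the kernel
`J(z) = exp(−γ₁|z|) − Γ exp(−γ₂|z|)` is nonnegative definite. -/
theorem exp_abs_difference_nonneg_definite (γ₁ γ₂ Γ : ℝ) (h21 : γ₂ < γ₁)
    (h2 : 0 < γ₂) (hΓ0 : 0 < Γ) (hΓ : Γ ≤ γ₂ / γ₁) :
    ∀ (n : ℕ) (x c : Fin n → ℝ),
      0 ≤ ∑ i, ∑ j, c i * c j *
          (Real.exp (-γ₁ * |x i - x j|) - Γ * Real.exp (-γ₂ * |x i - x j|)) :=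
  exp_abs_difference_nonneg_definite_general γ₁ γ₂ Γ h21 h2 hΓ
end

section
/- The Mexican hat kernel J(z) = (1 − z²)·exp(−z²/2) gives rise to a nonnegative definite kernel: for every n ∈ ℕ, all points x₁, …, xₙ ∈ ℝ and all real coefficients c₁, …, cₙ, one has ∑_{i,j=1}^n c_i·c_j·(1 − (x_i − x_j)²)·exp(−(x_i − x_j)²/2) ≥ 0. -/
/-!
The Gaussian kernel has the feature expansion
`exp (-(x - y) ^ 2 / 2) = ∑ₖ (k !)⁻¹ (xᵏ exp (-x ^ 2 / 2)) (yᵏ exp (-y ^ 2 / 2))`, coming from the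
exponential series of `exp (x * y)`. Since `J (x - y) = ∂ₓ ∂_y exp (-(x - y) ^ 2 / 2)`,
differentiating the features gives an expansion `J (x - y) = ∑ₖ (k !)⁻¹ ψₖ(x) ψₖ(y)` with
nonnegative weights, and then `∑ᵢⱼ cᵢ cⱼ J (xᵢ - xⱼ) = ∑ₖ (k !)⁻¹ (∑ᵢ cᵢ ψₖ(xᵢ))² ≥ 0`.
-/

open Real Finset
open scoped Nat

theorem sum_sum_mul_nonneg_of_hasSum_features {ι α β : Type*} [Fintype ι] {K : α → α → ℝ}
    (w : β → ℝ) (f : β → α → ℝ) (hw : ∀ k, 0 ≤ w k)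
    (hK : ∀ a b, HasSum (fun k => w k * (f k a * f k b)) (K a b)) (x : ι → α) (c : ι → ℝ) :
    0 ≤ ∑ i, ∑ j, c i * c j * K (x i) (x j) := by
  have hsum := hasSum_sum (s := univ) fun i _ =>
    hasSum_sum (s := univ) fun j _ => (hK (x i) (x j)).mul_left (c i * c j)
  refine hsum.nonneg fun k => ?_
  have hsq : ∑ i, ∑ j, c i * c j * (w k * (f k (x i) * f k (x j)))
      = w k * ((∑ i, c i * f k (x i)) * ∑ j, c j * f k (x j)) := by
    rw [sum_mul_sum, mul_sum]
    exact sum_congr rfl fun i _ => by rw [mul_sum]; exact sum_congr rfl fun j _ => by ring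
  exact hsq ▸ mul_nonneg (hw k) (mul_self_nonneg _)

theorem hasSum_pow_div_factorial (u : ℝ) : HasSum (fun n => u ^ n / n !) (exp u) := by
  simpa [← Real.exp_eq_exp_ℝ] using NormedSpace.expSeries_div_hasSum_exp (𝔸 := ℝ) u

theorem hasSum_pow_succ_div_factorial_succ (u : ℝ) :
    HasSum (fun n => u ^ (n + 1) / (n + 1)!) (exp u - 1) := by
  simpa using (hasSum_nat_add_iff' 1).mpr (hasSum_pow_div_factorial u)

theorem hasSum_mul_pow_div_factorial (u : ℝ) :
    HasSum (fun n => n * u ^ n / n !) (u * exp u) := by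
  rw [← hasSum_nat_add_iff' 1]
  simp only [sum_range_one, CharP.cast_eq_zero, zero_mul, zero_div, sub_zero]
  refine ((hasSum_pow_div_factorial u).mul_left u).congr_fun fun n => ?_
  rw [Nat.factorial_succ]
  push_cast
  field_simp
  ring

theorem hasSum_inv_factorial_mul_poly (x y : ℝ) :
    HasSum (fun k : ℕ => (k ! : ℝ)⁻¹ *
        ((k * x ^ (k - 1) - x ^ (k + 1)) * (k * y ^ (k - 1) - y ^ (k + 1))))
      ((1 - (x - y) ^ 2) * exp (x * y)) := by
  set u := x * y
  have hsum := (((hasSum_mul_pow_div_factorial u).add (hasSum_pow_div_factorial u)).sub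
    ((hasSum_pow_div_factorial u).mul_left (x ^ 2 + y ^ 2))).add
    ((hasSum_pow_succ_div_factorial_succ u).mul_left u)
  -- split off `k = 0`, the only index where `k - 1` truncates
  rw [← hasSum_nat_add_iff' 1, sum_range_one]
  convert hsum.congr_fun fun n => ?_ using 1
  · simp only [u]
    ring
  · simp only [u, Nat.factorial_succ, add_tsub_cancel_right]
    push_cast
    field_simp
    ring

/-- The derivative of `x ^ k * exp (-x ^ 2 / 2)`; at `k = 0` the truncated `k - 1` is harmless,
being multiplied by `k`. -/
noncomputable def mexicanHatFeature (k : ℕ) (x : ℝ) : ℝ :=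
  (k * x ^ (k - 1) - x ^ (k + 1)) * exp (-x ^ 2 / 2)

theorem hasSum_inv_factorial_mul_mexicanHatFeature (x y : ℝ) :
    HasSum (fun k => (k ! : ℝ)⁻¹ * (mexicanHatFeature k x * mexicanHatFeature k y))
      ((1 - (x - y) ^ 2) * exp (-(x - y) ^ 2 / 2)) := by
  have hexp : exp (-x ^ 2 / 2) * exp (-y ^ 2 / 2) * exp (x * y) = exp (-(x - y) ^ 2 / 2) := by
    rw [← exp_add, ← exp_add]
    congr 1
    ring
  rw [← hexp, mul_left_comm]
  refine ((hasSum_inv_factorial_mul_poly x y).mul_left _).congr_fun fun k => ?_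
  simp only [mexicanHatFeature]
  ring

/-- The Mexican hat kernel `J(z) = (1 − z²) exp(−z²/2)` is nonnegative definite. -/
theorem mexican_hat_nonneg_definite :
    ∀ (n : ℕ) (x c : Fin n → ℝ),
      0 ≤ ∑ i, ∑ j, c i * c j *
          ((1 - (x i - x j) ^ 2) * Real.exp (-(x i - x j) ^ 2 / 2)) := fun _ x c =>
  sum_sum_mul_nonneg_of_hasSum_features
    (K := fun a b => (1 - (a - b) ^ 2) * exp (-(a - b) ^ 2 / 2))
    (fun k => (k ! : ℝ)⁻¹) mexicanHatFeature (fun _ => by positivity)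
    hasSum_inv_factorial_mul_mexicanHatFeature x c
end

section
/- For every ξ ∈ ℝ, ∫_ℝ (1 − |x|)·exp(−|x|)·cos(ξ·x) dx = 4·ξ²/(1 + ξ²)². In particular, the Fourier transform of the wizard hat kernel J(x) = (1/4)·(1 − |x|)·exp(−|x|) is nonnegative. -/
/-!
On `(0, ∞)` the integrand is the real part of `(1 - x) e^{-z x}` with `z = 1 - iξ`, and the
Laplace transform of `1 - x` is `1/z - 1/z² = (z - 1)/z²`, whose real part is
`2ξ²/(1 + ξ²)²`. The integrand on `ℝ` is even, which doubles this.
-/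

open MeasureTheory Set Filter Topology Complex

lemma norm_cexp_neg_mul_ofReal (z : ℂ) (x : ℝ) : ‖cexp (-z * x)‖ = Real.exp (-z.re * x) := by
  simp [Complex.norm_exp]

section LaplaceTransform

variable {z : ℂ}

lemma tendsto_cexp_neg_mul_atTop (hz : 0 < z.re) :
    Tendsto (fun x : ℝ => cexp (-z * x)) atTop (𝓝 0) := by
  rw [Complex.tendsto_exp_nhds_zero_iff]
  simpa using tendsto_id.const_mul_atTop_of_neg (neg_lt_zero.2 hz)

lemma tendsto_mul_cexp_neg_mul_atTop (hz : 0 < z.re) :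
    Tendsto (fun x : ℝ => (x : ℂ) * cexp (-z * x)) atTop (𝓝 0) := by
  refine tendsto_zero_iff_norm_tendsto_zero.mpr ?_
  refine (tendsto_rpow_mul_exp_neg_mul_atTop_nhds_zero 1 z.re hz).congr' ?_
  filter_upwards [eventually_ge_atTop 0] with x hx
  rw [norm_mul, norm_cexp_neg_mul_ofReal, Complex.norm_real, Real.norm_of_nonneg hx,
    Real.rpow_one]

lemma integrableOn_Ioi_mul_cexp_neg_mul (hz : 0 < z.re) :
    IntegrableOn (fun x : ℝ => (x : ℂ) * cexp (-z * x)) (Ioi 0) := by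
  refine (integrable_norm_iff (by fun_prop)).mp ?_
  refine (integrableOn_rpow_mul_exp_neg_mul_rpow (s := 1) (p := 1) (by norm_num) one_pos
    hz).congr_fun (fun x hx => ?_) measurableSet_Ioi
  simp only [norm_mul, norm_cexp_neg_mul_ofReal, Complex.norm_real, Real.norm_of_nonneg hx.out.le,
    Real.rpow_one]

lemma integral_Ioi_mul_cexp_neg_mul (hz : 0 < z.re) :
    ∫ x : ℝ in Ioi 0, (x : ℂ) * cexp (-z * x) = 1 / z ^ 2 := by
  have hz0 : z ≠ 0 := by rintro rfl; simp at hz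
  have hderiv : ∀ x : ℂ, HasDerivAt (fun x => -cexp (-z * x) * (x / z + 1 / z ^ 2))
      (x * cexp (-z * x)) x := by
    intro x
    convert! (((hasDerivAt_id x).const_mul (-z)).cexp.neg.mul
      (((hasDerivAt_id x).div_const z).add_const (1 / z ^ 2))) using 1
    simp only [id, Pi.neg_apply]
    field
  have hlim : Tendsto (fun x : ℝ => -cexp (-z * x) * (x / z + 1 / z ^ 2)) atTop
      (𝓝 (-(1 / z) * 0 - 1 / z ^ 2 * 0)) := by
    refine (((tendsto_mul_cexp_neg_mul_atTop hz).const_mul (-(1 / z))).sub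
      ((tendsto_cexp_neg_mul_atTop hz).const_mul (1 / z ^ 2))).congr fun x => ?_
    ring
  rw [integral_Ioi_of_hasDerivAt_of_tendsto' (fun x _ => (hderiv x).comp_ofReal)
    (integrableOn_Ioi_mul_cexp_neg_mul hz) hlim]
  simp

lemma integral_Ioi_one_sub_mul_cexp_neg_mul (hz : 0 < z.re) :
    ∫ x : ℝ in Ioi 0, (1 - x : ℂ) * cexp (-z * x) = (z - 1) / z ^ 2 := by
  have hz0 : z ≠ 0 := by rintro rfl; simp at hz
  have hexp : IntegrableOn (fun x : ℝ => cexp (-z * x)) (Ioi 0) :=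
    integrableOn_exp_mul_complex_Ioi (by simpa using hz) 0
  simp_rw [sub_mul, one_mul]
  rw [integral_sub hexp (integrableOn_Ioi_mul_cexp_neg_mul hz),
    integral_exp_mul_complex_Ioi (by simpa using hz), integral_Ioi_mul_cexp_neg_mul hz]
  simp only [ofReal_zero, mul_zero, Complex.exp_zero]
  field_simp

end LaplaceTransform

lemma one_sub_mul_exp_neg_mul_cos_eq_re (ξ x : ℝ) :
    (1 - x) * Real.exp (-x) * Real.cos (ξ * x) = ((1 - x : ℂ) * cexp (-(1 - ξ * I) * x)).re := by
  rw [← ofReal_one, ← ofReal_sub, re_ofReal_mul, Complex.exp_re]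
  simp [mul_assoc]

lemma integral_Ioi_one_sub_mul_exp_neg_mul_cos (ξ : ℝ) :
    ∫ x in Ioi (0 : ℝ), (1 - x) * Real.exp (-x) * Real.cos (ξ * x)
      = 2 * ξ ^ 2 / (1 + ξ ^ 2) ^ 2 := by
  have hz : 0 < (1 - ξ * I).re := by simp
  simp_rw [one_sub_mul_exp_neg_mul_cos_eq_re, ← RCLike.re_to_complex]
  rw [integral_re, RCLike.re_to_complex, integral_Ioi_one_sub_mul_cexp_neg_mul hz]
  · simp only [sub_sub_cancel_left, pow_two, div_re, neg_re, mul_re, ofReal_re, I_re, mul_zero,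
      ofReal_im, I_im, mul_one, sub_self, neg_zero, sub_re, one_re, sub_zero, sub_im, one_im,
      mul_im, add_zero, zero_sub, mul_neg, neg_mul, neg_neg, zero_mul, normSq_apply, one_mul,
      zero_div, neg_im, zero_add]
    rw [show (1 - ξ * ξ) * (1 - ξ * ξ) + (-ξ + -ξ) * (-ξ + -ξ) = (1 + ξ * ξ) * (1 + ξ * ξ) by ring]
    ring
  · simp_rw [sub_mul, one_mul]
    exact (integrableOn_exp_mul_complex_Ioi (by simp) 0).sub
      (integrableOn_Ioi_mul_cexp_neg_mul hz)

/-- The Fourier (cosine) transform of `x ↦ (1 − |x|) exp(−|x|)` equals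
`4ξ²/(1 + ξ²)²`; in particular the Fourier transform of the wizard hat kernel
`J(x) = (1/4)(1 − |x|) exp(−|x|)` is nonnegative. -/
theorem wizard_hat_fourier_transform (ξ : ℝ) :
    (∫ x : ℝ, (1 - |x|) * Real.exp (-|x|) * Real.cos (ξ * x)
        = 4 * ξ ^ 2 / (1 + ξ ^ 2) ^ 2) ∧
      0 ≤ ∫ x : ℝ, 1 / 4 * (1 - |x|) * Real.exp (-|x|) * Real.cos (ξ * x) := by
  have heven : (∫ x : ℝ, (1 - |x|) * Real.exp (-|x|) * Real.cos (ξ * x))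
      = 2 * ∫ x in Ioi (0 : ℝ), (1 - x) * Real.exp (-x) * Real.cos (ξ * x) := by
    rw [← integral_comp_abs (f := fun x => (1 - x) * Real.exp (-x) * Real.cos (ξ * x))]
    congr 1 with x
    rcases abs_choice x with h | h <;> simp [h]
  have hvalue : (∫ x : ℝ, (1 - |x|) * Real.exp (-|x|) * Real.cos (ξ * x))
      = 4 * ξ ^ 2 / (1 + ξ ^ 2) ^ 2 := by
    rw [heven, integral_Ioi_one_sub_mul_exp_neg_mul_cos]
    ring
  refine ⟨hvalue, ?_⟩
  simp_rw [mul_assoc (1 / 4 : ℝ), integral_const_mul, hvalue]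
  positivity
end

section
/- The wizard hat kernel J(z) = (1/4)·(1 − |z|)·exp(−|z|) gives rise to a nonnegative definite kernel: for every n ∈ ℕ, all points x₁, …, xₙ ∈ ℝ and all real coefficients c₁, …, cₙ, one has ∑_{i,j=1}^n c_i·c_j·(1/4)·(1 − |x_i − x_j|)·exp(−|x_i − x_j|) ≥ 0. -/
/-!
The wizard hat `J` is an autocorrelation: for `φ = wizardHatRoot`, i.e. `φ u = ± e^{-|u|} / 2`
signed like `u`, one has `∫ φ (a - t) φ (b - t) dt = J (a - b)`, so the quadratic form
`∑ cᵢ cⱼ J (xᵢ - xⱼ)` equals `∫ (∑ cᵢ φ (xᵢ - t))² dt ≥ 0`.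
-/

open Real MeasureTheory Set

theorem sum_sum_mul_integral_mul_nonneg {α β ι : Type*} [Fintype ι] [MeasurableSpace α]
    {μ : Measure α} (g : β → α → ℝ) (hg : ∀ y z, Integrable (fun t => g y t * g z t) μ)
    (x : ι → β) (c : ι → ℝ) :
    0 ≤ ∑ i, ∑ j, c i * c j * ∫ t, g (x i) t * g (x j) t ∂μ := by
  have hint : ∀ i j, Integrable (fun t => c i * g (x i) t * (c j * g (x j) t)) μ := fun i j =>
    ((hg (x i) (x j)).const_mul (c i * c j)).congr (.of_forall fun t => by ring)
  calc 0 ≤ ∫ t, (∑ i, c i * g (x i) t) ^ 2 ∂μ := integral_nonneg fun t => sq_nonneg _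
    _ = ∑ i, ∑ j, ∫ t, c i * g (x i) t * (c j * g (x j) t) ∂μ := by
      simp_rw [sq, Finset.sum_mul_sum]
      rw [integral_finsetSum _ fun i _ => integrable_finsetSum _ fun j _ => hint i j]
      exact Finset.sum_congr rfl fun i _ => integral_finsetSum _ fun j _ => hint i j
    _ = ∑ i, ∑ j, c i * c j * ∫ t, g (x i) t * g (x j) t ∂μ := by
      simp_rw [← integral_const_mul]
      congr! 4 with i _ j _ t
      ring

theorem integrable_and_integral_eq_Iic_add_Ioc_add_Ioi {f : ℝ → ℝ} {a b : ℝ} (hab : b ≤ a)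
    (hb : IntegrableOn f (Iic b)) (hba : IntegrableOn f (Ioc b a)) (ha : IntegrableOn f (Ioi a)) :
    Integrable f ∧
      ∫ t, f t = (∫ t in Iic b, f t) + (∫ t in Ioc b a, f t) + ∫ t in Ioi a, f t := by
  have hIoi : IntegrableOn f (Ioi b) := by
    simpa only [Ioc_union_Ioi_eq_Ioi hab] using hba.union ha
  refine ⟨by simpa only [Iic_union_Ioi, integrableOn_univ] using hb.union hIoi, ?_⟩
  rw [← intervalIntegral.integral_Iic_add_Ioi hb hIoi, add_assoc,
    ← setIntegral_union (Ioc_disjoint_Ioi le_rfl) measurableSet_Ioi hba ha,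
    Ioc_union_Ioi_eq_Ioi hab]

noncomputable def wizardHat (z : ℝ) : ℝ := 1 / 4 * (1 - |z|) * exp (-|z|)

noncomputable def wizardHatRoot (u : ℝ) : ℝ := if 0 ≤ u then exp (-u) / 2 else -exp u / 2

theorem wizardHatRoot_of_nonneg {u : ℝ} (hu : 0 ≤ u) : wizardHatRoot u = exp (-u) / 2 :=
  if_pos hu

theorem wizardHatRoot_of_neg {u : ℝ} (hu : u < 0) : wizardHatRoot u = -exp u / 2 :=
  if_neg hu.not_ge

theorem integrable_and_integral_wizardHatRoot_sub_mul_of_le {a b : ℝ} (hab : b ≤ a) :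
    Integrable (fun t => wizardHatRoot (a - t) * wizardHatRoot (b - t)) ∧
      ∫ t, wizardHatRoot (a - t) * wizardHatRoot (b - t) = wizardHat (a - b) := by
  set F := fun t => wizardHatRoot (a - t) * wizardHatRoot (b - t)
  have hIic : EqOn (fun t => exp (-(a + b)) / 4 * exp (2 * t)) F (Iic b) := by
    intro t (ht : t ≤ b)
    simp only [F, wizardHatRoot_of_nonneg (by linarith : 0 ≤ a - t),
      wizardHatRoot_of_nonneg (by linarith : 0 ≤ b - t)]
    rw [div_mul_eq_mul_div, ← exp_add, div_mul_div_comm, ← exp_add]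
    ring_nf
  have hIoc : EqOn (fun _ => -(exp (b - a) / 4)) F (Ioc b a) := by
    rintro t ⟨hbt, hta⟩
    simp only [F, wizardHatRoot_of_nonneg (sub_nonneg.2 hta), wizardHatRoot_of_neg (sub_neg.2 hbt)]
    rw [div_mul_div_comm, mul_neg, ← exp_add]
    ring_nf
  have hIoi : EqOn (fun t => exp (a + b) / 4 * exp (-2 * t)) F (Ioi a) := by
    intro t (ht : a < t)
    simp only [F, wizardHatRoot_of_neg (by linarith : a - t < 0),
      wizardHatRoot_of_neg (by linarith : b - t < 0)]
    rw [div_mul_eq_mul_div, ← exp_add, div_mul_div_comm, neg_mul_neg, ← exp_add]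
    ring_nf
  obtain ⟨hint, hsplit⟩ := integrable_and_integral_eq_Iic_add_Ioc_add_Ioi hab
    (IntegrableOn.congr_fun ((integrableOn_exp_mul_Iic two_pos b).const_mul _) hIic
      measurableSet_Iic)
    ((integrableOn_const measure_Ioc_lt_top.ne).congr_fun hIoc measurableSet_Ioc)
    (IntegrableOn.congr_fun ((integrableOn_exp_mul_Ioi (neg_lt_zero.2 two_pos) a).const_mul _)
      hIoi measurableSet_Ioi)
  refine ⟨hint, ?_⟩
  rw [hsplit, ← setIntegral_congr_fun measurableSet_Iic hIic,
    ← setIntegral_congr_fun measurableSet_Ioc hIoc,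
    ← setIntegral_congr_fun measurableSet_Ioi hIoi, integral_const_mul,
    integral_exp_mul_Iic two_pos, setIntegral_const, Real.volume_real_Ioc_of_le hab,
    integral_const_mul, integral_exp_mul_Ioi (neg_lt_zero.2 two_pos),
    wizardHat, abs_of_nonneg (sub_nonneg.2 hab), smul_eq_mul, neg_sub]
  have hb : exp (-(a + b)) * exp (2 * b) = exp (b - a) := by rw [← exp_add]; ring_nf
  have ha : exp (a + b) * exp (-2 * a) = exp (b - a) := by rw [← exp_add]; ring_nf
  linear_combination (hb + ha) / 8

theorem integrable_and_integral_wizardHatRoot_sub_mul (a b : ℝ) :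
    Integrable (fun t => wizardHatRoot (a - t) * wizardHatRoot (b - t)) ∧
      ∫ t, wizardHatRoot (a - t) * wizardHatRoot (b - t) = wizardHat (a - b) := by
  wlog hab : b ≤ a generalizing a b
  · simp_rw [mul_comm (wizardHatRoot (a - _)), wizardHat, abs_sub_comm a b]
    exact this b a (le_of_not_ge hab)
  exact integrable_and_integral_wizardHatRoot_sub_mul_of_le hab

/-- The wizard hat kernel `J(z) = (1/4)(1 − |z|) exp(−|z|)` is nonnegative
definite. -/
theorem wizard_hat_nonneg_definite :
    ∀ (n : ℕ) (x c : Fin n → ℝ),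
      0 ≤ ∑ i, ∑ j, c i * c j *
          (1 / 4 * (1 - |x i - x j|) * Real.exp (-|x i - x j|)) := by
  intro n x c
  have := sum_sum_mul_integral_mul_nonneg (fun y t => wizardHatRoot (y - t))
    (fun y z => (integrable_and_integral_wizardHatRoot_sub_mul y z).1) x c
  simpa only [(integrable_and_integral_wizardHatRoot_sub_mul _ _).2, wizardHat] using this
end

section
/- Let b > 0. Then the kernel J(z) = exp(−b|z|)·(b·sin(|z|) + cos(z)) gives rise to a nonnegative definite kernel: for every n ∈ ℕ, all points x₁, …, xₙ ∈ ℝ and all real coefficients c₁, …, cₙ, one has ∑_{i,j=1}^n c_i·c_j·exp(−b·|x_i − x_j|)·(b·sin(|x_i − x_j|) + cos(x_i − x_j)) ≥ 0. -/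
/-!
Up to the factor `4b(b² + 1)`, `J(x - y)` is the autocorrelation `∫ φ(s - x) φ(s - y) ds` of the
damped sine `φ(s) = e^{-bs} sin s` (for `s ≥ 0`, and `0` for `s < 0`). Hence the quadratic form
`∑ cᵢ cⱼ J(xᵢ - xⱼ)` equals `4b(b² + 1) ∫ (∑ cᵢ φ(s - xᵢ))² ds ≥ 0`. The autocorrelation is computed
by writing `sin t sin (t + z) = (cos z - cos (2t + z)) / 2` and using the Laplace transform of a
shifted cosine.
-/

open MeasureTheory Real Set Filter Topology

theorem sum_mul_integral_mul_nonneg {α ι : Type*} [MeasurableSpace α] [Fintype ι]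
    (μ : Measure α) (f : ι → α → ℝ) (hf : ∀ i j, Integrable (fun a => f i a * f j a) μ)
    (c : ι → ℝ) : 0 ≤ ∑ i, ∑ j, c i * c j * ∫ a, f i a * f j a ∂μ := by
  have hexpand (a : α) : (∑ i, c i * f i a) ^ 2 = ∑ i, ∑ j, c i * c j * (f i a * f j a) := by
    rw [sq, Finset.sum_mul_sum]
    exact Finset.sum_congr rfl fun i _ => Finset.sum_congr rfl fun j _ => mul_mul_mul_comm ..
  have hsq : ∑ i, ∑ j, c i * c j * ∫ a, f i a * f j a ∂μ = ∫ a, (∑ i, c i * f i a) ^ 2 ∂μ := by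
    simp_rw [hexpand]
    rw [integral_finsetSum _ fun i _ => integrable_finsetSum _ fun j _ => (hf i j).const_mul _]
    refine Finset.sum_congr rfl fun i _ => ?_
    rw [integral_finsetSum _ fun j _ => (hf i j).const_mul _]
    simp_rw [integral_const_mul]
  exact hsq ▸ integral_nonneg fun a => sq_nonneg _

theorem abs_mul_sin_sub_mul_cos_le (p q x : ℝ) : |p * sin x - q * cos x| ≤ |p| + |q| :=
  calc |p * sin x - q * cos x| ≤ |p| * |sin x| + |q| * |cos x| := by
        simpa only [Real.norm_eq_abs, abs_mul] using norm_sub_le (p * sin x) (q * cos x)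
    _ ≤ |p| + |q| := by
        gcongr
        · exact mul_le_of_le_one_right (abs_nonneg p) (abs_sin_le_one x)
        · exact mul_le_of_le_one_right (abs_nonneg q) (abs_cos_le_one x)

theorem integrableOn_exp_neg_mul_mul_cos_Ioi {a : ℝ} (ha : 0 < a) (ω θ : ℝ) :
    IntegrableOn (fun u => exp (-a * u) * cos (ω * u + θ)) (Ioi 0) :=
  (exp_neg_integrableOn_Ioi 0 ha).mul_bdd (by fun_prop)
    (ae_of_all _ fun u => by simpa using abs_cos_le_one (ω * u + θ))

theorem integral_exp_neg_mul_mul_cos_Ioi {a : ℝ} (ha : 0 < a) (ω θ : ℝ) :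
    ∫ u in Ioi 0, exp (-a * u) * cos (ω * u + θ) =
      (a * cos θ - ω * sin θ) / (a ^ 2 + ω ^ 2) := by
  have hden : 0 < a ^ 2 + ω ^ 2 := by positivity
  set F : ℝ → ℝ := fun u =>
    exp (-a * u) * (ω * sin (ω * u + θ) - a * cos (ω * u + θ)) / (a ^ 2 + ω ^ 2)
  have hderiv : ∀ u ∈ Ici (0 : ℝ), HasDerivAt F (exp (-a * u) * cos (ω * u + θ)) u := by
    intro u _
    have hlin : HasDerivAt (fun u => ω * u + θ) ω u := by
      simpa using ((hasDerivAt_id u).const_mul ω).add_const θ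
    have hexp : HasDerivAt (fun u => exp (-a * u)) (exp (-a * u) * -a) u := by
      simpa using ((hasDerivAt_id u).const_mul (-a)).exp
    refine ((hexp.mul ((hlin.sin.const_mul ω).sub (hlin.cos.const_mul a))).div_const
      (a ^ 2 + ω ^ 2)).congr_deriv ?_
    simp only [Pi.sub_apply]
    field_simp
    ring
  have hlim : Tendsto F atTop (𝓝 0) := by
    have hdecay : Tendsto (fun u => exp (-a * u)) atTop (𝓝 0) :=
      tendsto_exp_atBot.comp (tendsto_id.const_mul_atTop_of_neg (neg_neg_of_pos ha))
    have hbdd : IsBoundedUnder (· ≤ ·) atTop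
        fun u => ‖(ω * sin (ω * u + θ) - a * cos (ω * u + θ)) / (a ^ 2 + ω ^ 2)‖ := by
      refine isBoundedUnder_of ⟨(|ω| + |a|) / (a ^ 2 + ω ^ 2), fun u => ?_⟩
      rw [norm_div, norm_of_nonneg hden.le]
      gcongr
      exact abs_mul_sin_sub_mul_cos_le ω a _
    simpa [F, mul_div_assoc] using hdecay.zero_mul_isBoundedUnder_le hbdd
  rw [integral_Ioi_of_hasDerivAt_of_tendsto' hderiv
    (integrableOn_exp_neg_mul_mul_cos_Ioi ha ω θ) hlim]
  simp only [F, mul_zero, exp_zero, zero_add, one_mul, zero_sub]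
  ring

noncomputable def dampedSine (b : ℝ) : ℝ → ℝ :=
  (Ici 0).indicator fun s => exp (-b * s) * sin s

noncomputable def dampedOscillatoryKernel (b z : ℝ) : ℝ :=
  exp (-b * |z|) * (b * sin |z| + cos z)

section DampedSine

variable {b : ℝ}

theorem measurable_dampedSine (b : ℝ) : Measurable (dampedSine b) :=
  (by fun_prop : Measurable fun s => exp (-b * s) * sin s).indicator measurableSet_Ici

theorem norm_dampedSine_le_one (hb : 0 ≤ b) (s : ℝ) : ‖dampedSine b s‖ ≤ 1 := by
  by_cases hs : 0 ≤ s
  · simp only [dampedSine, indicator_of_mem (mem_Ici.2 hs), norm_mul,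
      norm_of_nonneg (exp_pos _).le]
    exact mul_le_one₀ (exp_le_one_iff.2 (by nlinarith)) (norm_nonneg _) (abs_sin_le_one s)
  · simp [dampedSine, hs]

theorem integrable_dampedSine (hb : 0 < b) : Integrable (dampedSine b) := by
  rw [dampedSine, integrable_indicator_iff measurableSet_Ici,
    integrableOn_Ici_iff_integrableOn_Ioi]
  exact (exp_neg_integrableOn_Ioi 0 hb).mul_bdd (by fun_prop)
    (ae_of_all _ fun s => abs_sin_le_one s)

theorem integrable_dampedSine_sub_mul_dampedSine_sub (hb : 0 < b) (x y : ℝ) :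
    Integrable fun s => dampedSine b (s - x) * dampedSine b (s - y) :=
  ((integrable_dampedSine hb).comp_sub_right y).bdd_mul
    ((measurable_dampedSine b).comp (measurable_sub_const x)).aestronglyMeasurable
    (ae_of_all _ fun s => norm_dampedSine_le_one hb.le (s - x))

theorem dampedSine_mul_dampedSine_add {z : ℝ} (hz : 0 ≤ z) :
    (fun t => dampedSine b t * dampedSine b (t + z)) = (Ici 0).indicator fun t =>
      exp (-b * z) / 2 *
        (exp (-(2 * b) * t) * cos (0 * t + z) - exp (-(2 * b) * t) * cos (2 * t + z)) := by
  funext t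
  by_cases ht : 0 ≤ t
  · have hexp : exp (-b * t) * exp (-b * (t + z)) = exp (-b * z) * exp (-(2 * b) * t) := by
      rw [← exp_add, ← exp_add]; ring_nf
    have hcos_add : cos (2 * t + z) = cos t * cos (t + z) - sin t * sin (t + z) := by
      rw [← cos_add]; ring_nf
    have hcos_sub : cos z = cos (t + z) * cos t + sin (t + z) * sin t := by
      rw [← cos_sub]; ring_nf
    simp only [dampedSine, indicator_of_mem (mem_Ici.2 ht),
      indicator_of_mem (mem_Ici.2 (add_nonneg ht hz)), zero_mul, zero_add]
    linear_combination sin t * sin (t + z) * hexp +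
      exp (-b * z) * exp (-(2 * b) * t) / 2 * (hcos_add - hcos_sub)
  · simp [dampedSine, ht]

theorem integral_dampedSine_mul_dampedSine_add {z : ℝ} (hb : 0 < b) (hz : 0 ≤ z) :
    ∫ t, dampedSine b t * dampedSine b (t + z) =
      exp (-b * z) * (b * sin z + cos z) / (4 * b * (b ^ 2 + 1)) := by
  have h2b : 0 < 2 * b := by positivity
  rw [dampedSine_mul_dampedSine_add hz, integral_indicator measurableSet_Ici,
    integral_Ici_eq_integral_Ioi, integral_const_mul,
    integral_sub (integrableOn_exp_neg_mul_mul_cos_Ioi h2b 0 z)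
      (integrableOn_exp_neg_mul_mul_cos_Ioi h2b 2 z),
    integral_exp_neg_mul_mul_cos_Ioi h2b, integral_exp_neg_mul_mul_cos_Ioi h2b]
  field_simp
  ring

theorem integral_dampedSine_sub_mul_dampedSine_sub (hb : 0 < b) (x y : ℝ) :
    ∫ s, dampedSine b (s - x) * dampedSine b (s - y) =
      dampedOscillatoryKernel b (x - y) / (4 * b * (b ^ 2 + 1)) := by
  wlog hxy : y ≤ x generalizing x y
  · conv_lhs => enter [2, s]; rw [mul_comm]
    simp_rw [this y x (le_of_not_ge hxy), dampedOscillatoryKernel, abs_sub_comm y x,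
      ← cos_neg (y - x), neg_sub]
  have hshift : (fun s => dampedSine b (s - x) * dampedSine b (s - y)) =
      fun s => (fun t => dampedSine b t * dampedSine b (t + (x - y))) (s - x) := by
    simp only [sub_add_sub_cancel]
  rw [hshift, integral_sub_right_eq_self (fun t => dampedSine b t * dampedSine b (t + (x - y))),
    integral_dampedSine_mul_dampedSine_add hb (sub_nonneg.2 hxy), dampedOscillatoryKernel,
    abs_of_nonneg (sub_nonneg.2 hxy)]

end DampedSine

/-- For `b > 0`, the kernel `J(z) = exp(−b|z|)(b sin|z| + cos z)` is nonnegative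
definite. -/
theorem damped_oscillatory_kernel_nonneg_definite (b : ℝ) (hb : 0 < b) :
    ∀ (n : ℕ) (x c : Fin n → ℝ),
      0 ≤ ∑ i, ∑ j, c i * c j *
          (Real.exp (-b * |x i - x j|) *
            (b * Real.sin |x i - x j| + Real.cos (x i - x j))) := by
  intro n x c
  have hgram := sum_mul_integral_mul_nonneg volume (fun i s => dampedSine b (s - x i))
    (fun i j => integrable_dampedSine_sub_mul_dampedSine_sub hb (x i) (x j)) c
  simp_rw [integral_dampedSine_sub_mul_dampedSine_sub hb, ← mul_div_assoc,
    ← Finset.sum_div] at hgram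
  rwa [le_div_iff₀ (by positivity), zero_mul] at hgram
end
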